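/- There exists a constant C > 0 such that for all N ≥ 2, setting K = ⌈N · log N⌉ (natural logarithm), the lazy hypercube walk satisfies, for every starting position p ∈ {0,1}^N: TV(μ_K(p), U) ≤ C/N, where U is the uniform distribution on {0,1}^N. -/

import Mathlib

open scoped ENNReal

/-- Total variation distance between two distributions: `(1/2) Σ_x |μ(x) − ν(x)|`. -/
noncomputable def tvDist {X : Type*} (μ ν : PMF X) : ℝ≥0∞ :=
  (1 / 2) * ∑' x, max (μ x - ν x) (ν x - μ x)

/-- One step of the lazy hypercube walk on `{0,1}^N`: sample `i` uniformly from `{0,…,N}`;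
if `i = 0` stay put, otherwise flip coordinate `i`. -/
noncomputable def hcStep (N : ℕ) (p : Fin N → Bool) : PMF (Fin N → Bool) :=
  (PMF.uniformOfFintype (Fin (N + 1))).bind fun i =>
    PMF.pure fun j => if (j : ℕ) + 1 = (i : ℕ) then !(p j) else p j

/-- Distribution of the position of the lazy hypercube walk after `K` steps from `p`. -/
noncomputable def hcWalk (N : ℕ) (p : Fin N → Bool) : ℕ → PMF (Fin N → Bool)
  | 0 => PMF.pure p
  | (K + 1) => (hcWalk N p K).bind (hcStep N)

/-
The Walsh characters `χ_S(x) = ∏_{j ∈ S} (-1)^{x_j}` diagonalise the lazy walk: one step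
multiplies `χ_S` by `λ_{|S|} = 1 - 2|S|/(N+1)`. Expanding the point mass at `p` in this basis,
`μ_K(p)(x) = 2^{-N} Σ_S χ_S(p) χ_S(x) λ_{|S|}^K`, so every point deviates from `2^{-N}` by at
most `2^{-N} Σ_{k=1}^N C(N,k) |λ_k|^K`, and the total variation distance is at most half that
sum. With `m = min(k, N+1-k)` one has `C(N,k) ≤ N^m` and `|λ_k| ≤ exp(-2m/(N+1))`, so the
`k`-th term is at most `q^m` for `q = N exp(-2K/(N+1))`; the sum is then geometric, bounded by
`2q/(1-q)`, and `K ≥ N log N` gives `q ≤ e²/N`.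
-/

open Finset Real

lemma ENNReal.max_tsub_tsub_eq_ofReal_abs {a b : ℝ≥0∞} (ha : a ≠ ∞) (hb : b ≠ ∞) :
    max (a - b) (b - a) = ENNReal.ofReal |a.toReal - b.toReal| := by
  lift a to NNReal using ha
  lift b to NNReal using hb
  rw [← ENNReal.coe_sub, ← ENNReal.coe_sub, ← ENNReal.coe_max, ← NNReal.nndist_eq,
    ← edist_nndist, edist_dist, NNReal.dist_eq, ENNReal.coe_toReal, ENNReal.coe_toReal]

lemma tvDist_eq_ofReal {X : Type*} [Fintype X] (μ ν : PMF X) :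
    tvDist μ ν = ENNReal.ofReal (1 / 2 * ∑ x, |(μ x).toReal - (ν x).toReal|) := by
  simp_rw [tvDist, tsum_fintype, ENNReal.max_tsub_tsub_eq_ofReal_abs (μ.apply_ne_top _)
    (ν.apply_ne_top _), ← ENNReal.ofReal_sum_of_nonneg fun x _ => abs_nonneg _,
    ENNReal.ofReal_mul (by norm_num : (0 : ℝ) ≤ 1 / 2)]
  simp

lemma tvDist_le_one {X : Type*} (μ ν : PMF X) : tvDist μ ν ≤ 1 := by
  have : ∀ x, max (μ x - ν x) (ν x - μ x) ≤ μ x + ν x := fun x =>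
    max_le (tsub_le_self.trans le_self_add) (tsub_le_self.trans le_add_self)
  calc tvDist μ ν ≤ 1 / 2 * ∑' x, (μ x + ν x) := by unfold tvDist; gcongr with x; exact this x
    _ = 1 := by rw [ENNReal.tsum_add, μ.tsum_coe, ν.tsum_coe, one_add_one_eq_two,
      ENNReal.div_mul_cancel two_ne_zero ENNReal.ofNat_ne_top]

lemma PMF.map_apply_of_involutive {α : Type*} {f : α → α} (hf : Function.Involutive f)
    (μ : PMF α) (x : α) : μ.map f x = μ (f x) := by
  rw [PMF.map_apply, tsum_eq_single (f x) fun y hy => if_neg fun h => hy (by rw [h, hf]),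
    hf, if_pos rfl]

lemma Finset.sum_erase_empty_apply_card {ι M : Type*} [Fintype ι] [DecidableEq ι]
    [AddCommGroup M] (g : ℕ → M) :
    ∑ S ∈ (univ : Finset (Finset ι)).erase ∅, g #S =
      ∑ k ∈ range (Fintype.card ι), (Fintype.card ι).choose (k + 1) • g (k + 1) := by
  rw [sum_erase_eq_sub (mem_univ _), ← powerset_univ, sum_powerset_apply_card, card_univ,
    sum_range_succ']
  simp

noncomputable def walsh {ι : Type*} (S : Finset ι) (x : ι → Bool) : ℝ :=
  ∏ j ∈ S, if x j then -1 else 1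

section Walsh
variable {ι : Type*}

lemma abs_walsh (S : Finset ι) (x : ι → Bool) : |walsh S x| = 1 := by
  rw [walsh, abs_prod]
  exact prod_eq_one fun j _ => by split <;> simp

lemma sum_walsh_mul_walsh [Fintype ι] (p x : ι → Bool) :
    ∑ S : Finset ι, walsh S p * walsh S x = if x = p then 2 ^ Fintype.card ι else 0 := by
  have factor : ∀ j, 1 + (if p j then (-1 : ℝ) else 1) * (if x j then -1 else 1)
      = if x j = p j then 2 else 0 := fun j => by
    cases p j <;> cases x j <;> norm_num
  simp_rw [walsh, ← prod_mul_distrib, ← powerset_univ, ← prod_one_add, factor,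
    Fintype.prod_ite_zero, prod_const, card_univ, funext_iff]

lemma walsh_update_not [DecidableEq ι] (S : Finset ι) (x : ι → Bool) (j : ι) :
    walsh S (Function.update x j (!x j)) = (if j ∈ S then -1 else 1) * walsh S x := by
  unfold walsh
  split_ifs with hj
  · rw [← mul_prod_erase S _ hj, ← mul_prod_erase S _ hj, Function.update_self,
      prod_congr rfl fun k hk => by rw [Function.update_of_ne (ne_of_mem_erase hk)]]
    cases x j <;> simp
  · rw [one_mul]
    exact prod_congr rfl fun k hk => by rw [Function.update_of_ne (ne_of_mem_of_not_mem hk hj)]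

end Walsh

def lazyFlip (N : ℕ) (i : Fin (N + 1)) (x : Fin N → Bool) : Fin N → Bool :=
  fun j => if (j : ℕ) + 1 = i then !(x j) else x j

namespace lazyFlip
variable {N : ℕ}

@[simp] lemma zero_apply (x : Fin N → Bool) : lazyFlip N 0 x = x := by
  funext j; simp [lazyFlip]

lemma succ_apply (j : Fin N) (x : Fin N → Bool) :
    lazyFlip N j.succ x = Function.update x j (!x j) := by
  funext k
  simp only [lazyFlip, Fin.val_succ, Nat.add_right_cancel_iff, Fin.val_inj, Function.update_apply]
  split_ifs with h <;> simp [h]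

lemma involutive (i : Fin (N + 1)) : Function.Involutive (lazyFlip N i) := fun x => by
  funext j; by_cases h : (j : ℕ) + 1 = i <;> simp [lazyFlip, h]

end lazyFlip

lemma hcWalk_succ_apply (N : ℕ) (p : Fin N → Bool) (K : ℕ) (x : Fin N → Bool) :
    hcWalk N p (K + 1) x = ∑ i, (N + 1 : ℝ≥0∞)⁻¹ * hcWalk N p K (lazyFlip N i x) := by
  have : hcWalk N p (K + 1) = (PMF.uniformOfFintype (Fin (N + 1))).bind fun i =>
      (hcWalk N p K).map (lazyFlip N i) := PMF.bind_comm _ _ _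
  simp [this, PMF.bind_apply, PMF.map_apply_of_involutive (lazyFlip.involutive _)]

noncomputable def hcEigenvalue (N k : ℕ) : ℝ := 1 - 2 * k / (N + 1)

lemma sum_walsh_lazyFlip {N : ℕ} (S : Finset (Fin N)) (x : Fin N → Bool) :
    ∑ i, walsh S (lazyFlip N i x) = (N + 1) * hcEigenvalue N S.card * walsh S x := by
  have sign_sum : ∑ j : Fin N, (if j ∈ S then (-1 : ℝ) else 1) = N - 2 * S.card := by
    rw [sum_ite, sum_const, sum_const, filter_mem_eq_inter, univ_inter, filter_not]
    simp [card_univ_sdiff, Nat.cast_sub (show #S ≤ N by simpa using S.card_le_univ)]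
    ring
  rw [Fin.sum_univ_succ]
  simp_rw [lazyFlip.zero_apply, lazyFlip.succ_apply, walsh_update_not, ← sum_mul, sign_sum,
    hcEigenvalue]
  field_simp
  ring

lemma hcWalk_toReal_eq (N : ℕ) (p : Fin N → Bool) (K : ℕ) (x : Fin N → Bool) :
    (hcWalk N p K x).toReal =
      (2 ^ N)⁻¹ * ∑ S : Finset (Fin N), walsh S p * walsh S x * hcEigenvalue N S.card ^ K := by
  induction K generalizing x with
  | zero =>
    simp_rw [pow_zero, mul_one, sum_walsh_mul_walsh, Fintype.card_fin]
    simp [hcWalk, PMF.pure_apply]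
    split_ifs <;> simp
  | succ K ih =>
    rw [hcWalk_succ_apply,
      ENNReal.toReal_sum fun i _ => ENNReal.mul_ne_top (by simp) (PMF.apply_ne_top _ _)]
    simp_rw [ENNReal.toReal_mul, ih, ENNReal.toReal_inv, mul_sum, sum_comm (γ := Fin (N + 1)),
      ← mul_sum]
    rw [mul_left_comm]
    congr 1
    rw [mul_sum]
    refine sum_congr rfl fun S _ => ?_
    rw [← sum_mul, ← mul_sum, sum_walsh_lazyFlip]
    have : (N + 1 : ℝ≥0∞).toReal = N + 1 := by exact_mod_cast ENNReal.toReal_natCast (N + 1)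
    rw [this, pow_succ]
    field_simp

lemma abs_hcWalk_toReal_sub_le (N : ℕ) (p : Fin N → Bool) (K : ℕ) (x : Fin N → Bool) :
    |(hcWalk N p K x).toReal - (2 ^ N)⁻¹| ≤
      (2 ^ N)⁻¹ * ∑ k ∈ range N, N.choose (k + 1) * |hcEigenvalue N (k + 1)| ^ K := by
  have empty_term : walsh ∅ p * walsh ∅ x * hcEigenvalue N (#(∅ : Finset (Fin N))) ^ K = 1 := by
    simp [walsh, hcEigenvalue]
  rw [hcWalk_toReal_eq, ← add_sum_erase _ _ (mem_univ ∅), empty_term, mul_add, mul_one,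
    add_sub_cancel_left, abs_mul, abs_of_pos (by positivity)]
  gcongr
  calc |∑ S ∈ univ.erase ∅, walsh S p * walsh S x * hcEigenvalue N #S ^ K|
      ≤ ∑ S ∈ univ.erase ∅, |hcEigenvalue N #S| ^ K := by
        refine (abs_sum_le_sum_abs _ _).trans (sum_le_sum fun S _ => ?_)
        rw [abs_mul, abs_mul, abs_walsh, abs_walsh, abs_pow, one_mul, one_mul]
    _ = ∑ k ∈ range N, N.choose (k + 1) * |hcEigenvalue N (k + 1)| ^ K := by
        rw [sum_erase_empty_apply_card (fun k => |hcEigenvalue N k| ^ K), Fintype.card_fin]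
        simp only [nsmul_eq_mul]

noncomputable def hcRate (N K : ℕ) : ℝ := N * exp (-(2 * K / (N + 1)))

lemma hcRate_nonneg (N K : ℕ) : 0 ≤ hcRate N K := by unfold hcRate; positivity

lemma pow_mul_one_sub_mul_pow_le {n a : ℝ} (m K : ℕ) (hn : 0 ≤ n) (ha : 0 ≤ 1 - a * m) :
    n ^ m * (1 - a * m) ^ K ≤ (n * exp (-(a * K))) ^ m := by
  calc n ^ m * (1 - a * m) ^ K ≤ n ^ m * exp (-(a * m)) ^ K := by
        gcongr
        linarith [add_one_le_exp (-(a * m))]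
    _ = (n * exp (-(a * K))) ^ m := by
        rw [mul_pow, ← exp_nat_mul, ← exp_nat_mul]
        ring_nf

lemma choose_mul_abs_hcEigenvalue_pow_le {N k : ℕ} (K : ℕ) (hk : k ≤ N) :
    N.choose k * |hcEigenvalue N k| ^ K ≤ hcRate N K ^ k + hcRate N K ^ (N + 1 - k) := by
  obtain ⟨m, hm, hchoose, heig⟩ : ∃ m, (m = k ∨ m = N + 1 - k) ∧ (N.choose k : ℝ) ≤ N ^ m ∧
      |hcEigenvalue N k| = 1 - 2 / (N + 1) * m := by
    have hN : (0 : ℝ) < N + 1 := by positivity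
    rcases le_total (2 * k) (N + 1) with h | h
    · refine ⟨k, .inl rfl, by exact_mod_cast N.choose_le_pow k, ?_⟩
      have h' : (2 * k : ℝ) ≤ N + 1 := by exact_mod_cast h
      rw [hcEigenvalue, abs_of_nonneg (by rw [sub_nonneg, div_le_one hN]; exact h')]
      ring
    · refine ⟨N + 1 - k, .inr rfl, ?_, ?_⟩
      · rw [← Nat.choose_symm hk]
        exact_mod_cast (N.choose_le_pow _).trans (Nat.pow_le_pow_right (by omega) (by omega))
      · have h' : (N + 1 : ℝ) ≤ 2 * k := by exact_mod_cast h
        rw [hcEigenvalue, abs_of_nonpos (by rw [sub_nonpos, le_div_iff₀ hN]; linarith),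
          Nat.cast_sub (by omega)]
        field_simp
        push_cast
        ring
  have hq := hcRate_nonneg N K
  have hbase : 0 ≤ 1 - 2 / (N + 1) * (m : ℝ) := heig ▸ abs_nonneg _
  calc (N.choose k : ℝ) * |hcEigenvalue N k| ^ K ≤ N ^ m * (1 - 2 / (N + 1) * m) ^ K := by
        rw [heig]; gcongr
    _ ≤ hcRate N K ^ m := by
        rw [hcRate, show 2 * (K : ℝ) / (N + 1) = 2 / (N + 1) * K by ring]
        exact pow_mul_one_sub_mul_pow_le m K N.cast_nonneg hbase
    _ ≤ hcRate N K ^ k + hcRate N K ^ (N + 1 - k) := by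
        rcases hm with rfl | rfl
        · exact le_add_of_nonneg_right (pow_nonneg hq _)
        · exact le_add_of_nonneg_left (pow_nonneg hq _)

lemma sum_choose_mul_abs_hcEigenvalue_pow_le {N K : ℕ} (hq : hcRate N K < 1) :
    ∑ k ∈ range N, N.choose (k + 1) * |hcEigenvalue N (k + 1)| ^ K ≤
      2 * hcRate N K / (1 - hcRate N K) := by
  set q := hcRate N K
  have hq0 : 0 ≤ q := hcRate_nonneg N K
  have geom : ∑ k ∈ range N, q ^ (k + 1) ≤ q / (1 - q) := by
    calc ∑ k ∈ range N, q ^ (k + 1) = ∑ i ∈ Ico 1 (N + 1), q ^ i := by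
          rw [sum_Ico_eq_sum_range]; simp [add_comm]
      _ ≤ q ^ 1 / (1 - q) := geom_sum_Ico_le_of_lt_one hq0 hq
      _ = q / (1 - q) := by rw [pow_one]
  have reflect : ∑ k ∈ range N, q ^ (N + 1 - (k + 1)) = ∑ k ∈ range N, q ^ (k + 1) := by
    rw [← sum_range_reflect]
    exact sum_congr rfl fun k hk => by rw [show N + 1 - (N - 1 - k + 1) = k + 1 by
      have := mem_range.1 hk; omega]
  calc ∑ k ∈ range N, N.choose (k + 1) * |hcEigenvalue N (k + 1)| ^ K
      ≤ ∑ k ∈ range N, (q ^ (k + 1) + q ^ (N + 1 - (k + 1))) :=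
        sum_le_sum fun k hk => choose_mul_abs_hcEigenvalue_pow_le K (mem_range.1 hk)
    _ ≤ 2 * q / (1 - q) := by
        rw [sum_add_distrib, reflect]
        linarith [show 2 * q / (1 - q) = 2 * (q / (1 - q)) by ring]

lemma tvDist_hcWalk_uniform_le (N : ℕ) (p : Fin N → Bool) (K : ℕ) :
    tvDist (hcWalk N p K) (PMF.uniformOfFintype (Fin N → Bool)) ≤
      ENNReal.ofReal (2 * hcRate N K) := by
  set q := hcRate N K
  rcases lt_or_ge (1 / 2) q with hq | hq
  · refine (tvDist_le_one _ _).trans ?_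
    rw [← ENNReal.ofReal_one]
    exact ENNReal.ofReal_le_ofReal (by linarith)
  have uniform_apply : ∀ x, (PMF.uniformOfFintype (Fin N → Bool) x).toReal = (2 ^ N)⁻¹ := by
    simp
  rw [tvDist_eq_ofReal]
  refine ENNReal.ofReal_le_ofReal ?_
  calc 1 / 2 * ∑ x, |(hcWalk N p K x).toReal - (PMF.uniformOfFintype _ x).toReal|
      ≤ 1 / 2 * ∑ _x : Fin N → Bool, (2 ^ N)⁻¹ *
          ∑ k ∈ range N, N.choose (k + 1) * |hcEigenvalue N (k + 1)| ^ K := by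
        gcongr with x
        rw [uniform_apply]
        exact abs_hcWalk_toReal_sub_le N p K x
    _ = 1 / 2 * ∑ k ∈ range N, N.choose (k + 1) * |hcEigenvalue N (k + 1)| ^ K := by
        simp
    _ ≤ 1 / 2 * (2 * q / (1 - q)) := by
        gcongr
        exact sum_choose_mul_abs_hcEigenvalue_pow_le (by linarith)
    _ ≤ 2 * q := by
        rw [mul_div_assoc', div_le_iff₀ (by linarith)]
        nlinarith [hcRate_nonneg N K]

lemma hcRate_le_of_le {N K : ℕ} (hK : N * log N ≤ K) : hcRate N K ≤ exp 2 / N := by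
  rcases N.eq_zero_or_pos with rfl | hN
  · simp [hcRate]
  have hN' : (0 : ℝ) < N := by exact_mod_cast hN
  have hlog : log N ≤ N := (log_le_sub_one_of_pos hN').trans (by linarith)
  have hexp : 2 * log N - 2 * K / (N + 1) ≤ 2 := by
    rw [sub_le_iff_le_add, ← sub_le_iff_le_add', le_div_iff₀ (by positivity)]
    nlinarith
  calc hcRate N K = exp (2 * log N - 2 * K / (N + 1)) / N := by
        have hN2 : exp (2 * log N) = N * N := by rw [two_mul, exp_add, exp_log hN']
        rw [hcRate, exp_sub, hN2, exp_neg]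
        field_simp
    _ ≤ exp 2 / N := by gcongr

theorem hcWalk_mixes_to_uniform :
    ∃ C : ℝ, 0 < C ∧
      ∀ N : ℕ, 2 ≤ N → ∀ p : Fin N → Bool,
        tvDist (hcWalk N p ⌈(N : ℝ) * Real.log N⌉₊)
            (PMF.uniformOfFintype (Fin N → Bool))
          ≤ ENNReal.ofReal (C / N) := by
  refine ⟨2 * exp 2, by positivity, fun N _ p => ?_⟩
  refine (tvDist_hcWalk_uniform_le N p _).trans (ENNReal.ofReal_le_ofReal ?_)
  rw [mul_div_assoc]
  gcongr
  exact hcRate_le_of_le (Nat.le_ceil _)
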